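/- Let p be an odd prime, q = p^ν (ν ≥ 1) a power of p, d = q^2+q+1, and k an algebraically closed field of characteristic p. Let h ∈ k[x_0,x_1,x_2] be the polynomial h = x_0^{q+1} + x_1^{q+1} + x_2^{q+1} − x_0^q x_1 − x_0^q x_2 − x_0 x_1^q − x_1^q x_2 − x_0 x_2^q − x_1 x_2^q + (x_0^2 + x_1^2 + x_2^2 − 2x_0x_1 − 2x_1x_2 − 2x_2x_0)^{(q+1)/2}, and define g(x,y) = h(x^d, y+1, 1) ∈ k[x,y]. Then the Milnor number of g equals q^2(q+1), i.e. dim_k k[[x,y]]/(∂g/∂x, ∂g/∂y) = q^2(q+1). (This is the Milnor number of the dual curve of the Fermat curve of degree d at each of its singular points on the coordinate triangle.) -/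

import Mathlib

/-!
Write `q = 2n + 1`, `A = x^d` and `U = A - y`. The Frobenius identities `(y + 1)^q = y^q + 1` and
`(A - y)^q = A^q - y^q` turn `g` into `U^(q+1) - 2A^q - 2A + (U^2 - 4A)^(n+1)`. Since `q = 0`,
`d = 1` and `2(n + 1) = 1` in `k`, its partials are `g_y = -F` and `g_x = x^(d-1) (F - 2(1 + W))`
with `W = (U^2 - 4A)^n` and `F = U^q + U W`. As `n ≥ 1`, `W` vanishes at the origin, so `1 + W` is a
unit of `k⟦x,y⟧`; and `F ≡ 2 U^q ≡ -2 y^q` modulo `A`. Hence the Jacobian ideal is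
`(x^(d-1), y^q)`, whose colength is `(d - 1) q = q^2 (q + 1)`.
-/

theorem Finsupp.eq_single_zero_add_single_one {M : Type*} [AddCommMonoid M] (m : Fin 2 →₀ M) :
    m = single 0 (m 0) + single 1 (m 1) := by
  ext i; fin_cases i <;> simp

namespace MvPowerSeries

open Finsupp

variable (k : Type*) [Field k]

noncomputable def coeffBox (a b : ℕ) : MvPowerSeries (Fin 2) k →ₗ[k] (Fin a × Fin b → k) :=
  LinearMap.pi fun ij => coeff (single 0 (ij.1 : ℕ) + single 1 (ij.2 : ℕ))

variable {k}

lemma coeffBox_surjective (a b : ℕ) : Function.Surjective (coeffBox k a b) := by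
  intro c
  let F : MvPowerSeries (Fin 2) k := fun m =>
    if h : m 0 < a ∧ m 1 < b then c (⟨m 0, h.1⟩, ⟨m 1, h.2⟩) else 0
  refine ⟨F, funext fun ij => ?_⟩
  change coeff _ F = c ij
  rw [coeff_apply]
  simp [F]

lemma coeffBox_eq_zero_iff {a b : ℕ} {F : MvPowerSeries (Fin 2) k} :
    coeffBox k a b F = 0 ↔ ∀ m : Fin 2 →₀ ℕ, m 0 < a → m 1 < b → coeff m F = 0 := by
  refine ⟨fun hF m ha hb => ?_, fun hF => funext fun ij => hF _ (by simp) (by simp)⟩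
  rw [eq_single_zero_add_single_one m]
  exact congrFun hF (⟨m 0, ha⟩, ⟨m 1, hb⟩)

lemma ker_coeffBox (a b : ℕ) :
    LinearMap.ker (coeffBox k a b) =
      (Ideal.span {(X 0 : MvPowerSeries (Fin 2) k) ^ a, X 1 ^ b}).restrictScalars k := by
  classical
  ext F
  rw [LinearMap.mem_ker, Submodule.restrictScalars_mem, coeffBox_eq_zero_iff]
  constructor
  · intro hF
    set F₁ : MvPowerSeries (Fin 2) k := fun m => if a ≤ m 0 then F m else 0
    have h₁ : X 0 ^ a ∣ F₁ := X_pow_dvd_iff.mpr fun m hm => if_neg (by omega)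
    have h₂ : X 1 ^ b ∣ F - F₁ := X_pow_dvd_iff.mpr fun m hm => by
      change F m - (if a ≤ m 0 then F m else 0) = 0
      split_ifs with ha
      · exact sub_self _
      · rw [sub_zero]; exact hF m (by omega) hm
    obtain ⟨c₁, hc₁⟩ := h₁
    obtain ⟨c₂, hc₂⟩ := h₂
    rw [Ideal.mem_span_pair]
    exact ⟨c₁, c₂, by rw [mul_comm c₁, mul_comm c₂, ← hc₁, ← hc₂, add_sub_cancel]⟩
  · intro hF m ha hb
    obtain ⟨c₁, c₂, rfl⟩ := Ideal.mem_span_pair.mp hF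
    rw [map_add, X_pow_dvd_iff.mp (dvd_mul_left _ c₁) m ha,
      X_pow_dvd_iff.mp (dvd_mul_left _ c₂) m hb, add_zero]

theorem finrank_quotient_span_X_pow_X_pow (a b : ℕ) :
    Module.finrank k (MvPowerSeries (Fin 2) k ⧸
      Ideal.span {(X 0 : MvPowerSeries (Fin 2) k) ^ a, X 1 ^ b}) = a * b := by
  let I := Ideal.span {(X 0 : MvPowerSeries (Fin 2) k) ^ a, X 1 ^ b}
  have e := (Submodule.Quotient.restrictScalarsEquiv k I).symm.trans
    ((Submodule.quotEquivOfEq _ _ (ker_coeffBox a b).symm).trans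
      ((coeffBox k a b).quotKerEquivOfSurjective (coeffBox_surjective a b)))
  rw [e.finrank_eq, Module.finrank_fintype_fun_eq_card, Fintype.card_prod, Fintype.card_fin,
    Fintype.card_fin]

end MvPowerSeries

open MvPolynomial

noncomputable def ballicoHefez (R : Type*) [CommRing R] (q : ℕ) : MvPolynomial (Fin 3) R :=
  X 0 ^ (q + 1) + X 1 ^ (q + 1) + X 2 ^ (q + 1)
    - X 0 ^ q * X 1 - X 0 ^ q * X 2 - X 0 * X 1 ^ q
    - X 1 ^ q * X 2 - X 0 * X 2 ^ q - X 1 * X 2 ^ q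
    + (X 0 ^ 2 + X 1 ^ 2 + X 2 ^ 2
        - C 2 * X 0 * X 1 - C 2 * X 1 * X 2 - C 2 * X 2 * X 0) ^ ((q + 1) / 2)

def ballicoHefezChart {S : Type*} [CommRing S] (n : ℕ) (U A : S) : S :=
  U ^ (2 * n + 2) - 2 * A ^ (2 * n + 1) - 2 * A + (U ^ 2 - 4 * A) ^ (n + 1)

section

variable {S : Type*} [CommRing S]

theorem aeval_ballicoHefez {R : Type*} [CommRing R] [Algebra R S] {p : ℕ} [ExpChar S p]
    {n ν : ℕ} (hq : 2 * n + 1 = p ^ ν) (A Y : S) :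
    aeval ![A, Y + 1, 1] (ballicoHefez R (2 * n + 1)) = ballicoHefezChart n (A - Y) A := by
  have hY : (Y + 1) ^ (2 * n + 1) = Y ^ (2 * n + 1) + 1 := by
    rw [hq, add_pow_expChar_pow, one_pow]
  have hU : (A - Y) ^ (2 * n + 1) = A ^ (2 * n + 1) - Y ^ (2 * n + 1) := by
    rw [hq, sub_pow_expChar_pow]
  have hm : (2 * n + 1 + 1) / 2 = n + 1 := by omega
  simp only [ballicoHefez, ballicoHefezChart, hm, map_add, map_sub, map_mul, map_pow, aeval_X,
    map_ofNat, Matrix.cons_val_zero, Matrix.cons_val_one, Matrix.cons_val_two,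
    Matrix.head_cons, Matrix.tail_cons]
  linear_combination (Y - A) * hY - (A - Y) * hU

theorem Derivation.map_ballicoHefezChart {R : Type*} [CommRing R] [Algebra R S]
    (D : Derivation R S S) {n : ℕ} (hq : ((2 * n + 1 : ℕ) : S) = 0) (U A : S) :
    D (ballicoHefezChart n U A) =
      (U ^ (2 * n + 1) + U * (U ^ 2 - 4 * A) ^ n) * D U - 2 * (1 + (U ^ 2 - 4 * A) ^ n) * D A := by
  have hD2 : D 2 = 0 := by simpa using D.map_natCast 2
  have hD4 : D 4 = 0 := by simpa using D.map_natCast 4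
  have e₁ : 2 * n + 2 - 1 = 2 * n + 1 := rfl
  have e₂ : 2 * n + 1 - 1 = 2 * n := rfl
  simp only [ballicoHefezChart, map_add, map_sub, D.leibniz, D.leibniz_pow, hD2, hD4, e₁, e₂,
    Nat.add_sub_cancel, smul_eq_mul, nsmul_eq_mul]
  push_cast at hq ⊢
  linear_combination (U ^ (2 * n + 1) * D U - 2 * A ^ (2 * n) * D A
    + (U ^ 2 - 4 * A) ^ n * (U * D U - 2 * D A)) * hq

theorem dvd_sub_pow_add_sub_mul_add_two_mul_pow {p : ℕ} [ExpChar S p] {n ν : ℕ}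
    (hq : 2 * n + 1 = p ^ ν) (A Y : S) :
    A ∣ (A - Y) ^ (2 * n + 1) + (A - Y) * ((A - Y) ^ 2 - 4 * A) ^ n + 2 * Y ^ (2 * n + 1) := by
  have hU : (A - Y) ^ (2 * n + 1) = A ^ (2 * n + 1) - Y ^ (2 * n + 1) := by
    rw [hq, sub_pow_expChar_pow]
  have hA : A ∣ ((A - Y) ^ 2 - 4 * A) - (A - Y) ^ 2 := Dvd.intro (-4) (by ring)
  obtain ⟨c, hc⟩ := hA.trans (sub_dvd_pow_sub_pow _ _ n)
  rw [← pow_mul] at hc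
  exact ⟨2 * A ^ (2 * n) + (A - Y) * c, by linear_combination (A - Y) * hc + 2 * hU⟩

end

theorem Ideal.span_mul_sub_neg_eq_span_pair {R : Type*} [CommRing R] {a b u v F : R}
    (hu : IsUnit u) (hv : IsUnit v) (hF : a ∣ F - v * b) :
    Ideal.span {a * (F - u), -F} = Ideal.span {a, b} := by
  obtain ⟨c, hc⟩ := hF
  apply le_antisymm
  · rw [Ideal.span_le, Set.insert_subset_iff, Set.singleton_subset_iff]
    exact ⟨Ideal.mem_span_pair.mpr ⟨F - u, 0, by ring⟩,
      Ideal.mem_span_pair.mpr ⟨-c, -v, by linear_combination hc⟩⟩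
  · set I := Ideal.span {a * (F - u), -F}
    have hF : F ∈ I := neg_neg F ▸ I.neg_mem (Ideal.subset_span (by simp))
    have ha : a ∈ I := by
      obtain ⟨u, rfl⟩ := hu
      have : a * (F - u) - a * F ∈ I :=
        I.sub_mem (Ideal.subset_span (by simp)) (I.mul_mem_left a hF)
      have key : -↑u⁻¹ * (a * (F - u) - a * F) = a := by linear_combination a * u.inv_mul
      exact key ▸ I.mul_mem_left _ this
    have hb : b ∈ I := by
      obtain ⟨v, rfl⟩ := hv
      have key : ↑v⁻¹ * (F - a * c) = b := by linear_combination ↑v⁻¹ * hc + b * v.inv_mul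
      exact key ▸ I.mul_mem_left _ (I.sub_mem hF (I.mul_mem_right c ha))
    rw [Ideal.span_le, Set.insert_subset_iff, Set.singleton_subset_iff]
    exact ⟨ha, hb⟩

theorem span_pderiv_ballicoHefezChart {k : Type*} [Field k] {p : ℕ} [ExpChar k p] {n ν d : ℕ}
    (hq : 2 * n + 1 = p ^ ν) (hqk : ((2 * n + 1 : ℕ) : k) = 0) (hn : n ≠ 0) (hdk : (d : k) = 1)
    (g : MvPolynomial (Fin 2) k)
    (hg : g = ballicoHefezChart n (X 0 ^ d - X 1) (X 0 ^ d)) :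
    Ideal.span {(pderiv 0 g : MvPowerSeries (Fin 2) k), (pderiv 1 g : MvPowerSeries (Fin 2) k)} =
      Ideal.span {MvPowerSeries.X 0 ^ (d - 1), MvPowerSeries.X 1 ^ (2 * n + 1)} := by
  set U : MvPolynomial (Fin 2) k := X 0 ^ d - X 1
  set W := (U ^ 2 - 4 * X 0 ^ d) ^ n
  set F := U ^ (2 * n + 1) + U * W
  have hqk' : ((2 * n + 1 : ℕ) : MvPolynomial (Fin 2) k) = 0 := by
    rw [← map_natCast C, hqk, map_zero]
  have hdk' : ((d : ℕ) : MvPolynomial (Fin 2) k) = 1 := by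
    rw [← map_natCast C, hdk, map_one]
  have hA₀ : pderiv 0 (X 0 ^ d : MvPolynomial (Fin 2) k) = X 0 ^ (d - 1) := by simp [hdk']
  have hA₁ : pderiv 1 (X 0 ^ d : MvPolynomial (Fin 2) k) = 0 := by simp
  have hU₀ : pderiv 0 U = X 0 ^ (d - 1) := by simp [U, hA₀]
  have hU₁ : pderiv 1 U = -1 := by simp [U]
  have hy : pderiv 1 g = -F := by
    rw [hg, Derivation.map_ballicoHefezChart _ hqk', hU₁, hA₁]
    ring
  have hx : pderiv 0 g = X 0 ^ (d - 1) * (F - 2 * (1 + W)) := by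
    rw [hg, Derivation.map_ballicoHefezChart _ hqk', hU₀, hA₀]
    ring
  have hdvd : X 0 ^ (d - 1) ∣ F - (-2) * X 1 ^ (2 * n + 1) := by
    refine (pow_dvd_pow _ (Nat.sub_le d 1)).trans ?_
    simpa [sub_neg_eq_add] using dvd_sub_pow_add_sub_mul_add_two_mul_pow hq (X 0 ^ d) (X 1)
  have hd : d ≠ 0 := by rintro rfl; simp at hdk
  have h2 : (2 : k) ≠ 0 := fun h => by simp [h] at hqk
  let φ := coeToMvPowerSeries.ringHom (σ := Fin 2) (R := k)
  have hc : ∀ f, MvPowerSeries.constantCoeff (φ f) = constantCoeff f := fun f => by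
    rw [← MvPowerSeries.coeff_zero_eq_constantCoeff_apply, constantCoeff_eq]
    exact MvPolynomial.coeff_coe (φ := f) 0
  have hu : IsUnit (φ (2 * (1 + W))) := by
    rw [MvPowerSeries.isUnit_iff_constantCoeff, hc]
    simp [W, U, hd, hn, h2, map_ofNat]
  have hv : IsUnit (φ (-2)) := by
    rw [MvPowerSeries.isUnit_iff_constantCoeff, hc]
    simp [h2, map_ofNat]
  have hφ : ∀ f : MvPolynomial (Fin 2) k, (f : MvPowerSeries (Fin 2) k) = φ f := fun _ => rfl
  have hX : ∀ i m, (MvPowerSeries.X i : MvPowerSeries (Fin 2) k) ^ m = φ (X i ^ m) := by simp [φ]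
  rw [hφ, hφ, hx, hy, hX, hX, map_neg, map_mul, map_sub]
  exact Ideal.span_mul_sub_neg_eq_span_pair hu hv
    (by simpa only [map_sub, map_mul] using map_dvd φ hdvd)

theorem milnor_number_dual_fermat_at_boundary_singularity_general
    {k : Type*} [Field k] (p ν q d : ℕ) (hp : p.Prime) (hp2 : p ≠ 2)
    [CharP k p] (hν : 1 ≤ ν) (hq : q = p ^ ν) (hd : d = q ^ 2 + q + 1)
    (h : MvPolynomial (Fin 3) k)
    (hh : h = X 0 ^ (q + 1) + X 1 ^ (q + 1) + X 2 ^ (q + 1)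
        - X 0 ^ q * X 1 - X 0 ^ q * X 2 - X 0 * X 1 ^ q
        - X 1 ^ q * X 2 - X 0 * X 2 ^ q - X 1 * X 2 ^ q
        + (X 0 ^ 2 + X 1 ^ 2 + X 2 ^ 2
            - C 2 * X 0 * X 1 - C 2 * X 1 * X 2 - C 2 * X 2 * X 0) ^ ((q + 1) / 2))
    (g : MvPolynomial (Fin 2) k)
    (hg : g = aeval ![(X 0 : MvPolynomial (Fin 2) k) ^ d, X 1 + 1, 1] h) :
    Module.finrank k
        (MvPowerSeries (Fin 2) k ⧸
          Ideal.span {((pderiv 0 g : MvPolynomial (Fin 2) k) : MvPowerSeries (Fin 2) k),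
            ((pderiv 1 g : MvPolynomial (Fin 2) k) : MvPowerSeries (Fin 2) k)}) =
      q ^ 2 * (q + 1) := by
  have : Fact p.Prime := ⟨hp⟩
  obtain ⟨n, rfl⟩ : Odd q := hq ▸ (hp.odd_of_ne_two hp2).pow
  have hn : n ≠ 0 := by
    rintro rfl
    have := one_lt_pow₀ hp.one_lt (show ν ≠ 0 by omega)
    omega
  have hqk : ((2 * n + 1 : ℕ) : k) = 0 := by
    rw [hq, Nat.cast_pow, CharP.cast_eq_zero, zero_pow (by omega)]
  have hdk : (d : k) = 1 := by
    rw [hd]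
    push_cast at hqk ⊢
    linear_combination (2 * n + 2 : k) * hqk
  have hg' : g = ballicoHefezChart n (X 0 ^ d - X 1) (X 0 ^ d) := by
    rw [hg, show h = ballicoHefez k (2 * n + 1) from hh, aeval_ballicoHefez hq]
  rw [span_pderiv_ballicoHefezChart hq hqk hn hdk g hg',
    MvPowerSeries.finrank_quotient_span_X_pow_X_pow, hd, Nat.add_sub_cancel]
  ring

/-- Let `p` be an odd prime, `q` a power of `p`, `d = q²+q+1`, `k` algebraically closed
of characteristic `p`, `h` the defining polynomial of the Ballico–Hefez curve, and
`g(x,y) = h(x^d, y+1, 1)`, a local equation of the dual curve of the Fermat curve of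
degree `d` at the singular point `[0:1:1]`. Then the Milnor number of `g`, i.e.
`dim_k k⟦x,y⟧/(∂g/∂x, ∂g/∂y)`, equals `q²(q+1)`. -/
theorem milnor_number_dual_fermat_at_boundary_singularity
    {k : Type*} [Field k] [IsAlgClosed k] (p ν q d : ℕ) (hp : p.Prime) (hp2 : p ≠ 2)
    [CharP k p] (hν : 1 ≤ ν) (hq : q = p ^ ν) (hd : d = q ^ 2 + q + 1)
    (h : MvPolynomial (Fin 3) k)
    (hh : h = X 0 ^ (q + 1) + X 1 ^ (q + 1) + X 2 ^ (q + 1)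
        - X 0 ^ q * X 1 - X 0 ^ q * X 2 - X 0 * X 1 ^ q
        - X 1 ^ q * X 2 - X 0 * X 2 ^ q - X 1 * X 2 ^ q
        + (X 0 ^ 2 + X 1 ^ 2 + X 2 ^ 2
            - C 2 * X 0 * X 1 - C 2 * X 1 * X 2 - C 2 * X 2 * X 0) ^ ((q + 1) / 2))
    (g : MvPolynomial (Fin 2) k)
    (hg : g = aeval ![(X 0 : MvPolynomial (Fin 2) k) ^ d, X 1 + 1, 1] h) :
    Module.finrank k
        (MvPowerSeries (Fin 2) k ⧸
          Ideal.span {((pderiv 0 g : MvPolynomial (Fin 2) k) : MvPowerSeries (Fin 2) k),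
            ((pderiv 1 g : MvPolynomial (Fin 2) k) : MvPowerSeries (Fin 2) k)}) =
      q ^ 2 * (q + 1) :=
  milnor_number_dual_fermat_at_boundary_singularity_general p ν q d hp hp2 hν hq hd h hh g hg
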